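/- If t ∈ ℕ, m ≥ 3, and t > max{ ln(ε/(4(m−2))) / (2·ln((m−2)/(m−1))), ln((2−ε)/4) / ln(1 − 1/(m−1)²) } for some ε ∈ (0,2), then τ(K_{2,l}) > m whenever l ≥ 4t. -/

import Mathlib

/-- A proper coloring of the graph `G` from the list assignment `L` (colors are
natural numbers): every vertex gets a color from its list, and adjacent vertices
get different colors. -/
def IsProperListColoring {V : Type*} (G : SimpleGraph V) (L : V → Finset ℕ) (f : V → ℕ) : Prop :=
  (∀ v, f v ∈ L v) ∧ ∀ ⦃u w⦄, G.Adj u w → f u ≠ f w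

/-- `P(G, L)`: the number of proper `L`-colorings of `G`. -/
noncomputable def numListColorings {V : Type*} (G : SimpleGraph V) (L : V → Finset ℕ) : ℕ :=
  {f : V → ℕ | IsProperListColoring G L f}.ncard

/-- `P(G, m)`: the chromatic polynomial of `G` evaluated at `m`, i.e. the number of
proper colorings of `G` using colors from `{1, …, m}`. -/
noncomputable def chromPoly {V : Type*} (G : SimpleGraph V) (m : ℕ) : ℕ :=
  numListColorings G fun _ => Finset.Icc 1 m

/-- `L` is an `m`-assignment: every list has size `m`. -/
def IsAssignment {V : Type*} (L : V → Finset ℕ) (m : ℕ) : Prop :=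
  ∀ v, (L v).card = m

/-- `P_ℓ(G, m)`: the list color function, the minimum of `P(G, L)` over all
`m`-assignments `L` for `G`. -/
noncomputable def listColorFunction {V : Type*} (G : SimpleGraph V) (m : ℕ) : ℕ :=
  sInf {p | ∃ L : V → Finset ℕ, IsAssignment L m ∧ numListColorings G L = p}

/-- `χ(G)`: the chromatic number, the least `m` admitting a proper coloring with
colors from `{1, …, m}`. -/
noncomputable def chromNum {V : Type*} (G : SimpleGraph V) : ℕ :=
  sInf {m | 0 < chromPoly G m}

/-- `χ_ℓ(G)`: the list chromatic number, the least `k` such that `G` has a proper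
`L`-coloring for every `k`-assignment `L`. -/
noncomputable def listChromNum {V : Type*} (G : SimpleGraph V) : ℕ :=
  sInf {k | ∀ L : V → Finset ℕ, IsAssignment L k → ∃ f, IsProperListColoring G L f}

/-- `τ(G)`: the list color function threshold, the least `k ≥ χ(G)` such that
`P_ℓ(G, m) = P(G, m)` whenever `m ≥ k`. -/
noncomputable def lcfThreshold {V : Type*} (G : SimpleGraph V) : ℕ :=
  sInf {k | chromNum G ≤ k ∧ ∀ m, k ≤ m → listColorFunction G m = chromPoly G m}

/-- The complete bipartite graph `K_{2,l}`. -/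
def K2l (l : ℕ) : SimpleGraph (Fin 2 ⊕ Fin l) := completeBipartiteGraph (Fin 2) (Fin l)

/-!
For a list assignment `L` of `K_{2,l}` with left vertices `x₁, x₂` and right vertices `y_j`,
`P(K_{2,l}, L) = ∑_{c₁ ∈ L x₁, c₂ ∈ L x₂} ∏_j |L y_j \ {c₁, c₂}|`.

If `m ≥ l + 2`, every `m`-assignment has at least `P(K_{2,l}, m)` colorings: compared with equal
lists, the left lists lose `m - |L x₁ ∩ L x₂|` diagonal pairs `c₁ = c₂`, each worth
`(m-1)^l ≤ (l+1)(m-2)^l`, but gain as many off-diagonal pairs, and every color of `L x₁ ∪ L x₂`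
missing from some `L y_j` raises a factor of many off-diagonal products from `m - 2` to `m - 1`.
So `τ(K_{2,l})` is finite, and it exceeds `m` as soon as one `m`-assignment has fewer than
`P(K_{2,l}, m)` colorings.

The paper's witness: `m - 2` colors common to all lists, two private colors on each left vertex,
and right lists adding one private color of each side, each of the four such pairs used `t` times.
Relative to `(m-1)^l`, its colorings fall short of `P(K_{2,l}, m)` by at least
`2 - 4(m-2)((m-2)/(m-1))^{2t} - 4(1 - 1/(m-1)²)^t`, which the two bounds on `t` make positive.
-/

open Finset

section Counting

variable {α : Type*} [DecidableEq α]

lemma sum_sum_eq_sum_inter_add_sum_sum_erase {M : Type*} [AddCommMonoid M] (A B : Finset α)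
    (f : α → α → M) :
    ∑ c₁ ∈ A, ∑ c₂ ∈ B, f c₁ c₂ = ∑ c ∈ A ∩ B, f c c + ∑ c₁ ∈ A, ∑ c₂ ∈ B.erase c₁, f c₁ c₂ := by
  have h : ∀ c₁ ∈ A, ∑ c₂ ∈ B, f c₁ c₂ =
      (if c₁ ∈ B then f c₁ c₁ else 0) + ∑ c₂ ∈ B.erase c₁, f c₁ c₂ := fun c₁ _ => by
    split_ifs with hc
    · exact (add_sum_erase B _ hc).symm
    · rw [erase_eq_of_notMem hc, zero_add]
  rw [sum_congr rfl h, sum_add_distrib, ← sum_filter, filter_mem_eq_inter]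

lemma card_sdiff_pair {T : Finset α} {a : ℕ} (hT : #T = a + 2) {c₁ c₂ : α} (hne : c₁ ≠ c₂) :
    #(T \ {c₁, c₂}) = a + (if c₁ ∈ T then 0 else 1) + (if c₂ ∈ T then 0 else 1) := by
  have hle := card_le_card (inter_subset_right (s₁ := {c₁, c₂}) (s₂ := T))
  rw [card_sdiff]
  by_cases h₁ : c₁ ∈ T <;> by_cases h₂ : c₂ ∈ T <;>
    simp_all [insert_inter_of_mem, insert_inter_of_notMem, card_pair hne]

lemma mul_card_sdiff_le_sum_sum_erase {A B T : Finset α} {a : ℕ}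
    (hA : a ≤ #A) (hB : a + 2 ≤ #B) :
    a * #((A ∪ B) \ T) ≤
      ∑ c₁ ∈ A, ∑ c₂ ∈ B.erase c₁, ((if c₁ ∈ T then 0 else 1) + (if c₂ ∈ T then 0 else 1)) := by
  set u : α → ℕ := fun c => if c ∈ T then 0 else 1
  have hsum : ∀ S : Finset α, ∑ c ∈ S, u c = #(S \ T) := fun S => by
    simp [u, sum_ite, filter_not, sdiff_eq_filter]
  have herase : ∀ c, #(B \ T) ≤ ∑ c₂ ∈ B.erase c, u c₂ + u c := fun c => by
    rw [← hsum]
    by_cases hc : c ∈ B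
    · rw [sum_erase_add _ _ hc]
    · rw [erase_eq_of_notMem hc]; exact Nat.le_add_right _ _
  have hrow : ∀ c₁ ∈ A, a * u c₁ + #(B \ T) ≤ ∑ c₂ ∈ B.erase c₁, (u c₁ + u c₂) := fun c₁ _ => by
    have : a + 1 ≤ #(B.erase c₁) := by have := pred_card_le_card_erase (s := B) (a := c₁); omega
    rw [sum_add_distrib, sum_const, smul_eq_mul]
    nlinarith [herase c₁]
  calc a * #((A ∪ B) \ T) ≤ a * (#(A \ T) + #(B \ T)) :=
        Nat.mul_le_mul_left _ (union_sdiff_distrib A B T ▸ card_union_le _ _)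
    _ ≤ a * #(A \ T) + #A * #(B \ T) := by nlinarith
    _ = ∑ c₁ ∈ A, (a * u c₁ + #(B \ T)) := by rw [sum_add_distrib, ← mul_sum, hsum]; simp
    _ ≤ _ := sum_le_sum hrow

end Counting

lemma pow_card_add_pow_mul_sum_le_prod {ι : Type*} (s : Finset ι) (a : ℕ) (e : ι → ℕ) :
    a ^ #s + a ^ (#s - 1) * ∑ i ∈ s, e i ≤ ∏ i ∈ s, (a + e i) := by
  induction s using Finset.cons_induction with
  | empty => simp
  | cons i s hi ih =>
    rw [prod_cons, sum_cons, card_cons, Nat.add_sub_cancel]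
    have hshift : a ^ #s * ∑ j ∈ s, e j ≤ a * (a ^ (#s - 1) * ∑ j ∈ s, e j) := by
      rcases s.eq_empty_or_nonempty with rfl | hs
      · simp
      · rw [← mul_assoc, mul_pow_sub_one hs.card_pos.ne']
    calc a ^ (#s + 1) + a ^ #s * (e i + ∑ j ∈ s, e j)
        ≤ (a + e i) * (a ^ #s + a ^ (#s - 1) * ∑ j ∈ s, e j) := by
          rw [pow_succ]; nlinarith [Nat.zero_le (e i * (a ^ (#s - 1) * ∑ j ∈ s, e j))]
      _ ≤ (a + e i) * ∏ j ∈ s, (a + e j) := Nat.mul_le_mul_left _ ih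

lemma add_one_pow_le_mul_pow {l a : ℕ} (hla : l ≤ a) : (a + 1) ^ l ≤ (l + 1) * a ^ l := by
  rw [add_pow]
  calc ∑ k ∈ range (l + 1), a ^ k * 1 ^ (l - k) * l.choose k
      ≤ ∑ _k ∈ range (l + 1), a ^ l := sum_le_sum fun k hk => by
        have hkl : k ≤ l := Nat.lt_succ_iff.1 (mem_range.1 hk)
        calc a ^ k * 1 ^ (l - k) * l.choose k = a ^ k * l.choose (l - k) := by
              rw [one_pow, mul_one, Nat.choose_symm hkl]
          _ ≤ a ^ k * a ^ (l - k) := Nat.mul_le_mul_left _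
              ((Nat.choose_le_pow l (l - k)).trans (Nat.pow_le_pow_left hla _))
          _ = a ^ l := by rw [← pow_add, Nat.add_sub_cancel' hkl]
    _ = (l + 1) * a ^ l := by simp

lemma prod_range_mul_eq_pow_of_periodic {M : Type*} [CommMonoid M] {f : ℕ → M} {p : ℕ}
    (hf : Function.Periodic f p) (t : ℕ) :
    ∏ i ∈ range (p * t), f i = (∏ i ∈ range p, f i) ^ t := by
  induction t with
  | zero => simp
  | succ t ih =>
    rw [Nat.mul_succ, prod_range_add, ih, pow_succ]
    congr 1
    exact prod_congr rfl fun i _ => by rw [add_comm, mul_comm]; exact hf.nat_mul t i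

lemma pow_lt_of_log_div_log_lt {x c : ℝ} (hx₀ : 0 < x) (hx₁ : x < 1) (hc : 0 < c) {t : ℕ}
    (h : Real.log c / Real.log x < t) : x ^ t < c := by
  rw [← Real.log_lt_log_iff (pow_pos hx₀ t) hc, Real.log_pow]
  rwa [div_lt_iff_of_neg (Real.log_neg hx₀ hx₁)] at h

section ListColorFunction

variable {V : Type*} {G : SimpleGraph V} {m : ℕ}

lemma listColorFunction_le {L : V → Finset ℕ} (hL : IsAssignment L m) :
    listColorFunction G m ≤ numListColorings G L :=
  Nat.sInf_le ⟨L, hL, rfl⟩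

lemma listColorFunction_eq_chromPoly
    (h : ∀ L : V → Finset ℕ, IsAssignment L m → chromPoly G m ≤ numListColorings G L) :
    listColorFunction G m = chromPoly G m :=
  (listColorFunction_le fun _ => Nat.card_Icc 1 m).antisymm
    (le_csInf ⟨_, _, fun _ => Nat.card_Icc 1 m, rfl⟩ fun _ ⟨L, hL, hp⟩ => hp ▸ h L hL)

lemma lt_lcfThreshold {k : ℕ} (hk : 0 < chromPoly G k)
    (hstable : ∀ q, k ≤ q → listColorFunction G q = chromPoly G q) {L : V → Finset ℕ}
    (hL : IsAssignment L m) (hlt : numListColorings G L < chromPoly G m) :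
    m < lcfThreshold G := by
  have hne : {k | chromNum G ≤ k ∧ ∀ q, k ≤ q → listColorFunction G q = chromPoly G q}.Nonempty :=
    ⟨k, Nat.sInf_le hk, hstable⟩
  by_contra! hm
  have := (Nat.sInf_mem hne).2 m hm
  exact (listColorFunction_le hL).not_gt (this ▸ hlt)

end ListColorFunction

lemma isProperListColoring_K2l_iff {l : ℕ} {L : Fin 2 ⊕ Fin l → Finset ℕ}
    {f : Fin 2 ⊕ Fin l → ℕ} :
    IsProperListColoring (K2l l) L f ↔
      (∀ v, f v ∈ L v) ∧ ∀ j, f (.inr j) ∉ ({f (.inl 0), f (.inl 1)} : Finset ℕ) := by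
  simp only [IsProperListColoring, mem_insert, mem_singleton, not_or]
  refine and_congr_right fun _ => ⟨fun h j => ⟨h (by simp [K2l]), h (by simp [K2l])⟩, ?_⟩
  rintro h (i | j) (i' | j') hadj <;> simp only [K2l, completeBipartiteGraph_adj] at hadj
  · simp at hadj
  · fin_cases i <;> simp [Ne.symm (h j').1, Ne.symm (h j').2]
  · fin_cases i' <;> simp [(h j).1, (h j).2]
  · simp at hadj

lemma numListColorings_K2l (l : ℕ) (L : Fin 2 ⊕ Fin l → Finset ℕ) :
    numListColorings (K2l l) L =
      ∑ c₁ ∈ L (.inl 0), ∑ c₂ ∈ L (.inl 1), ∏ j, #(L (.inr j) \ {c₁, c₂}) := by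
  set S := (Fintype.piFinset L).filter
    fun f => ∀ j, f (.inr j) ∉ ({f (.inl 0), f (.inl 1)} : Finset ℕ)
  have hS : {f | IsProperListColoring (K2l l) L f} = S := by
    ext f; simp [S, isProperListColoring_K2l_iff]
  rw [numListColorings, hS, Set.ncard_coe_finset, ← sum_product',
    card_eq_sum_card_fiberwise (f := fun f => (f (.inl 0), f (.inl 1)))
      (t := L (.inl 0) ×ˢ L (.inl 1)) fun f hf => by simp_all [S]]
  refine sum_congr rfl fun c hc => ?_
  rw [← Fintype.card_piFinset]
  refine card_nbij' (fun f j => f (.inr j)) (fun h => Sum.elim ![c.1, c.2] h) ?_ ?_ ?_ ?_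
  · rintro f hf
    simp only [S, mem_coe, mem_filter, Fintype.mem_piFinset] at hf ⊢
    obtain ⟨⟨hL, hne⟩, rfl⟩ := hf
    exact fun j => mem_sdiff.2 ⟨hL _, hne j⟩
  · rintro h hh
    simp only [mem_coe, Fintype.mem_piFinset, mem_sdiff] at hh
    simp only [S, mem_coe, mem_filter, Fintype.mem_piFinset, mem_product] at hc ⊢
    refine ⟨⟨?_, fun j => by simpa using (hh j).2⟩, rfl⟩
    rintro (i | j)
    · fin_cases i <;> simp [hc.1, hc.2]
    · exact (hh j).1
  · rintro f hf
    simp only [S, mem_coe, mem_filter] at hf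
    ext (i | j)
    · fin_cases i <;> simp [← hf.2]
    · rfl
  · intro h _; rfl

lemma chromPoly_K2l (l a : ℕ) :
    chromPoly (K2l l) (a + 2) = (a + 2) * (a + 1) ^ l + (a + 2) * (a + 1) * a ^ l := by
  set T := Icc 1 (a + 2)
  have hT : #T = a + 2 := by simp [T]
  have hdiag : ∀ c ∈ T, ∏ _j : Fin l, #(T \ {c, c}) = (a + 1) ^ l := fun c hc => by
    simp [← erase_eq, card_erase_of_mem hc, hT]
  have hoff : ∀ c₁ ∈ T, ∑ c₂ ∈ T.erase c₁, ∏ _j : Fin l, #(T \ {c₁, c₂}) = (a + 1) * a ^ l :=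
    fun c₁ hc₁ => by
      rw [sum_const_nat (m := a ^ l) fun c₂ hc₂ => by
        simp [card_sdiff_pair hT (ne_of_mem_erase hc₂).symm, hc₁, mem_of_mem_erase hc₂]]
      rw [card_erase_of_mem hc₁, hT]; rfl
  rw [chromPoly, numListColorings_K2l, sum_sum_eq_sum_inter_add_sum_sum_erase, inter_self,
    sum_congr rfl hdiag, sum_congr rfl hoff]
  simp only [sum_const, hT, smul_eq_mul]
  ring

section Threshold

variable {α ι : Type*} [DecidableEq α] [Fintype ι] {a : ℕ} {R : ι → Finset α} {A B : Finset α}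

lemma le_sum_sum_erase_prod_card_sdiff (hR : ∀ j, #(R j) = a + 2) (hA : #A = a + 2)
    (hB : #B = a + 2) :
    (∑ c₁ ∈ A, #(B.erase c₁)) * a ^ Fintype.card ι +
        Fintype.card ι * a ^ Fintype.card ι * (a + 2 - #(A ∩ B)) ≤
      ∑ c₁ ∈ A, ∑ c₂ ∈ B.erase c₁, ∏ j, #(R j \ {c₁, c₂}) := by
  set l := Fintype.card ι
  set u : ι → α → ℕ := fun j c => if c ∈ R j then 0 else 1
  have hpair : ∀ c₁ ∈ A, ∀ c₂ ∈ B.erase c₁,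
      a ^ l + a ^ (l - 1) * ∑ j, (u j c₁ + u j c₂) ≤ ∏ j, #(R j \ {c₁, c₂}) :=
    fun c₁ _ c₂ hc₂ => by
      simp_rw [card_sdiff_pair (hR _) (ne_of_mem_erase hc₂).symm, add_assoc]
      exact pow_card_add_pow_mul_sum_le_prod univ a _
  have hmiss : l * (a * (a + 2 - #(A ∩ B))) ≤
      ∑ c₁ ∈ A, ∑ c₂ ∈ B.erase c₁, ∑ j, (u j c₁ + u j c₂) := by
    simp_rw [sum_comm (s := B.erase _), sum_comm (s := A)]
    rw [show l * (a * (a + 2 - #(A ∩ B))) = ∑ _j : ι, a * (a + 2 - #(A ∩ B)) by simp [l]]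
    refine sum_le_sum fun j _ => le_trans (Nat.mul_le_mul_left a ?_)
      (mul_card_sdiff_le_sum_sum_erase (T := R j) (by omega) hB.ge)
    have := hR j
    have := le_card_sdiff (R j) (A ∪ B)
    have := card_union_add_card_inter A B
    omega
  have hshift :
      l * a ^ l * (a + 2 - #(A ∩ B)) ≤ a ^ (l - 1) * (l * (a * (a + 2 - #(A ∩ B)))) := by
    rcases Nat.eq_zero_or_pos l with hl | hl
    · simp [hl]
    · rw [← mul_pow_sub_one hl.ne' a]; apply le_of_eq; ring
  calc (∑ c₁ ∈ A, #(B.erase c₁)) * a ^ l + l * a ^ l * (a + 2 - #(A ∩ B))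
      ≤ ∑ c₁ ∈ A, ∑ _c₂ ∈ B.erase c₁, a ^ l +
          a ^ (l - 1) * ∑ c₁ ∈ A, ∑ c₂ ∈ B.erase c₁, ∑ j, (u j c₁ + u j c₂) := by
        simp only [sum_const, smul_eq_mul, sum_mul]
        exact Nat.add_le_add_left (hshift.trans (Nat.mul_le_mul_left _ hmiss)) _
    _ = ∑ c₁ ∈ A, ∑ c₂ ∈ B.erase c₁, (a ^ l + a ^ (l - 1) * ∑ j, (u j c₁ + u j c₂)) := by
        simp only [mul_sum, ← sum_add_distrib]
    _ ≤ _ := sum_le_sum fun c₁ hc₁ => sum_le_sum (hpair c₁ hc₁)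

lemma le_sum_sum_prod_card_sdiff (hla : Fintype.card ι ≤ a) (hR : ∀ j, #(R j) = a + 2)
    (hA : #A = a + 2) (hB : #B = a + 2) :
    (a + 2) * (a + 1) ^ Fintype.card ι + (a + 2) * (a + 1) * a ^ Fintype.card ι ≤
      ∑ c₁ ∈ A, ∑ c₂ ∈ B, ∏ j, #(R j \ {c₁, c₂}) := by
  set l := Fintype.card ι
  set s := #(A ∩ B)
  have hdiag : s * (a + 1) ^ l ≤ ∑ c ∈ A ∩ B, ∏ j, #(R j \ {c, c}) := by
    rw [← smul_eq_mul, ← sum_const]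
    refine sum_le_sum fun c _ => ?_
    rw [show (a + 1) ^ l = ∏ _j : ι, (a + 1) by simp [l]]
    refine prod_le_prod' fun j _ => ?_
    simpa [← erase_eq, hR j] using pred_card_le_card_erase (s := R j) (a := c)
  have hcount : ∑ c₁ ∈ A, #(B.erase c₁) + s = (a + 2) * (a + 2) := by
    have := sum_sum_eq_sum_inter_add_sum_sum_erase A B fun _ _ => 1
    simp only [sum_const, smul_eq_mul, mul_one, hA, hB] at this
    omega
  obtain ⟨d, hd⟩ : ∃ d, a + 2 = s + d := ⟨a + 2 - s, by
    have := (card_le_card (inter_subset_left (s₁ := A) (s₂ := B))).trans hA.le; omega⟩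
  have hoff : (∑ c₁ ∈ A, #(B.erase c₁)) * a ^ l + l * a ^ l * (a + 2 - s) ≤
      ∑ c₁ ∈ A, ∑ c₂ ∈ B.erase c₁, ∏ j, #(R j \ {c₁, c₂}) :=
    le_sum_sum_erase_prod_card_sdiff hR hA hB
  rw [hd, Nat.add_sub_cancel_left] at hoff
  rw [show ∑ c₁ ∈ A, #(B.erase c₁) = (a + 2) * (a + 1) + d by rw [hd] at hcount ⊢; nlinarith]
    at hoff
  have hpow := Nat.mul_le_mul_left d (add_one_pow_le_mul_pow hla)
  rw [sum_sum_eq_sum_inter_add_sum_sum_erase]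
  calc (a + 2) * (a + 1) ^ l + (a + 2) * (a + 1) * a ^ l
      = s * (a + 1) ^ l + d * (a + 1) ^ l + (a + 2) * (a + 1) * a ^ l := by rw [hd]; ring
    _ ≤ s * (a + 1) ^ l + (((a + 2) * (a + 1) + d) * a ^ l + l * a ^ l * d) := by nlinarith
    _ ≤ _ := add_le_add hdiag hoff

end Threshold

theorem chromPoly_K2l_le_numListColorings {l a : ℕ} (hla : l ≤ a) {L : Fin 2 ⊕ Fin l → Finset ℕ}
    (hL : IsAssignment L (a + 2)) : chromPoly (K2l l) (a + 2) ≤ numListColorings (K2l l) L := by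
  have := le_sum_sum_prod_card_sdiff (R := fun j => L (.inr j)) (by simpa using hla)
    (fun j => hL _) (hL (.inl 0)) (hL (.inl 1))
  rwa [Fintype.card_fin, ← chromPoly_K2l, ← numListColorings_K2l] at this

lemma lt_lcfThreshold_K2l {l m : ℕ} {L : Fin 2 ⊕ Fin l → Finset ℕ} (hL : IsAssignment L m)
    (hlt : numListColorings (K2l l) L < chromPoly (K2l l) m) : m < lcfThreshold (K2l l) := by
  refine lt_lcfThreshold (k := l + 2) (by rw [chromPoly_K2l]; positivity) (fun q hq => ?_) hL hlt
  obtain ⟨a, rfl⟩ : ∃ a, q = a + 2 := ⟨q - 2, by omega⟩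
  exact listColorFunction_eq_chromPoly fun L hL =>
    chromPoly_K2l_le_numListColorings (by omega) hL

-- With `m = n + 2`: the common colors are `range n`, the private ones `n, n + 1` (left vertex 0)
-- and `n + 2, n + 3` (left vertex 1); the right vertices beyond the first `4 t` copy list 0.
def badList (n k : ℕ) : Finset ℕ := range n ∪ {n + k % 2, n + 2 + k / 2 % 2}

def badAssignment (n t : ℕ) {l : ℕ} : Fin 2 ⊕ Fin l → Finset ℕ :=
  Sum.elim ![range (n + 2), range n ∪ {n + 2, n + 3}]
    fun j => if (j : ℕ) < 4 * t then badList n j else range (n + 2)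

lemma card_range_union_pair {n x y : ℕ} (hx : n ≤ x) (hy : n ≤ y) (hxy : x ≠ y) :
    #(range n ∪ {x, y}) = n + 2 := by
  rw [card_union_of_disjoint (by simp [hx, hy]), card_range, card_pair hxy]

lemma card_badList (n k : ℕ) : #(badList n k) = n + 2 :=
  card_range_union_pair (by omega) (by omega) (by omega)

lemma isAssignment_badAssignment (n t l : ℕ) :
    IsAssignment (badAssignment n t (l := l)) (n + 2) := by
  rintro (i | j)
  · fin_cases i
    · simp [badAssignment]
    · exact card_range_union_pair (by omega) (by omega) (by omega)
  · simp only [badAssignment, Sum.elim_inr]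
    split_ifs
    · exact card_badList n j
    · simp

lemma mem_badList {n k c : ℕ} :
    c ∈ badList n k ↔ c < n ∨ c = n + k % 2 ∨ c = n + 2 + k / 2 % 2 := by
  simp only [badList, mem_union, mem_range, mem_insert, mem_singleton]

lemma card_badList_sdiff {n k c₁ c₂ : ℕ} (hne : c₁ ≠ c₂) :
    #(badList n k \ {c₁, c₂}) =
      n + (if c₁ ∈ badList n k then 0 else 1) + (if c₂ ∈ badList n k then 0 else 1) :=
  card_sdiff_pair (card_badList n k) hne

lemma prod_card_badAssignment_sdiff (n t g c₁ c₂ : ℕ) :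
    ∏ j : Fin (4 * t + g), #(badAssignment n t (.inr j) \ {c₁, c₂}) =
      (∏ k ∈ range 4, #(badList n k \ {c₁, c₂})) ^ t * #(range (n + 2) \ {c₁, c₂}) ^ g := by
  have hper : Function.Periodic (fun k => #(badList n k \ {c₁, c₂})) 4 := fun k => by
    have h₁ : (k + 4) % 2 = k % 2 := by omega
    have h₂ : (k + 4) / 2 % 2 = k / 2 % 2 := by omega
    simp only [badList, h₁, h₂]
  simp only [badAssignment, Sum.elim_inr]
  rw [Fin.prod_univ_eq_prod_range
      (fun j => #((if j < 4 * t then badList n j else range (n + 2)) \ {c₁, c₂})),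
    prod_range_add, ← prod_range_mul_eq_pow_of_periodic hper]
  congr 1
  · exact prod_congr rfl fun j hj => by simp [mem_range.1 hj]
  · simp

lemma prod_card_badAssignment_sdiff_of_ne {n t g c₁ c₂ : ℕ} (hne : c₁ ≠ c₂) :
    ∏ j : Fin (4 * t + g), #(badAssignment n t (.inr j) \ {c₁, c₂}) =
      (∏ k ∈ range 4, (n + (if c₁ ∈ badList n k then 0 else 1) +
        (if c₂ ∈ badList n k then 0 else 1))) ^ t *
      (n + (if c₁ < n + 2 then 0 else 1) + (if c₂ < n + 2 then 0 else 1)) ^ g := by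
  simp only [prod_card_badAssignment_sdiff, card_badList_sdiff hne,
    card_sdiff_pair (card_range (n + 2)) hne, mem_range]

lemma sum_range_union_pair (n : ℕ) (f : ℕ → ℕ) :
    ∑ c ∈ range n ∪ {n + 2, n + 3}, f c = ∑ c ∈ range n, f c + f (n + 2) + f (n + 3) := by
  rw [sum_union (by simp), sum_pair (by omega), add_assoc]

lemma sum_prod_card_badAssignment_sdiff_of_lt {n t g c : ℕ} (hc : c < n) :
    ∑ c₂ ∈ range n ∪ {n + 2, n + 3},
        ∏ j : Fin (4 * t + g), #(badAssignment n t (.inr j) \ {c, c₂}) =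
      (n + 1) ^ (4 * t + g) + (n - 1) * n ^ (4 * t + g) +
        2 * ((n ^ 2 * (n + 1) ^ 2) ^ t * (n + 1) ^ g) := by
  have hdiag : ∏ j : Fin (4 * t + g), #(badAssignment n t (.inr j) \ {c, c}) =
      (n + 1) ^ (4 * t + g) := by
    rw [prod_card_badAssignment_sdiff]
    simp only [insert_eq_of_mem, mem_singleton, ← erase_eq, mem_badList, hc, true_or,
      card_erase_of_mem, card_badList, Nat.add_one_sub_one, prod_const, card_range, mem_range,
      show c < n + 2 by omega]
    rw [pow_add, pow_mul]
  rw [sum_range_union_pair, ← add_sum_erase _ _ (mem_range.2 hc), hdiag,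
    sum_const_nat (m := n ^ (4 * t + g)) fun c₂ hc₂ => ?_]
  · simp [prod_card_badAssignment_sdiff_of_ne, prod_range_succ, mem_badList, hc,
      show c < n + 2 by omega, show c ≠ n + 2 by omega, show c ≠ n + 3 by omega, add_assoc]
    ring
  · obtain ⟨hne, hc₂⟩ := mem_erase.1 hc₂
    rw [mem_range] at hc₂
    simp [prod_card_badAssignment_sdiff_of_ne hne.symm, mem_badList, hc, hc₂,
      show c < n + 2 by omega, show c₂ < n + 2 by omega, ← pow_mul, ← pow_add]

lemma sum_prod_card_badAssignment_sdiff_of_le {n t g c : ℕ} (hc : n ≤ c) (hc' : c < n + 2) :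
    ∑ c₂ ∈ range n ∪ {n + 2, n + 3},
        ∏ j : Fin (4 * t + g), #(badAssignment n t (.inr j) \ {c, c₂}) =
      n * ((n ^ 2 * (n + 1) ^ 2) ^ t * n ^ g) +
        2 * ((n * (n + 1) ^ 2 * (n + 2)) ^ t * (n + 1) ^ g) := by
  obtain ⟨i, hi, rfl⟩ : ∃ i < 2, c = n + i := ⟨c - n, by omega, by omega⟩
  rw [sum_range_union_pair,
    sum_const_nat (m := (n ^ 2 * (n + 1) ^ 2) ^ t * n ^ g) fun c₂ hc₂ => ?_]
  · interval_cases i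
    all_goals
      simp [prod_card_badAssignment_sdiff_of_ne, prod_range_succ, mem_badList, add_assoc]
      ring
  · have hc₂ := mem_range.1 hc₂
    interval_cases i
    all_goals
      simp [prod_card_badAssignment_sdiff_of_ne, prod_range_succ, mem_badList, hc₂, hc₂.ne',
        show c₂ < n + 2 by omega, show n + 1 ≠ c₂ by omega, add_assoc, -mul_eq_mul_right_iff]
      ring

lemma numListColorings_badAssignment (n t g : ℕ) :
    numListColorings (K2l (4 * t + g)) (badAssignment n t) =
      n * ((n + 1) ^ (4 * t + g) + (n - 1) * n ^ (4 * t + g) +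
          2 * ((n ^ 2 * (n + 1) ^ 2) ^ t * (n + 1) ^ g)) +
        2 * (n * ((n ^ 2 * (n + 1) ^ 2) ^ t * n ^ g) +
          2 * ((n * (n + 1) ^ 2 * (n + 2)) ^ t * (n + 1) ^ g)) := by
  rw [numListColorings_K2l, show badAssignment n t (.inl 0) = range (n + 2) from rfl,
    show badAssignment n t (.inl 1) = range n ∪ {n + 2, n + 3} from rfl, sum_range_succ,
    sum_range_succ,
    sum_congr rfl fun c hc => sum_prod_card_badAssignment_sdiff_of_lt (mem_range.1 hc),
    sum_const, card_range, smul_eq_mul, sum_prod_card_badAssignment_sdiff_of_le le_rfl (by omega),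
    sum_prod_card_badAssignment_sdiff_of_le (by omega) (by omega)]
  ring

lemma numListColorings_badAssignment_lt_chromPoly {n t g : ℕ}
    (h : 4 * n * ((n : ℝ) / (n + 1)) ^ (2 * t) + 4 * (1 - 1 / ((n : ℝ) + 1) ^ 2) ^ t < 2) :
    numListColorings (K2l (4 * t + g)) (badAssignment n t) <
      chromPoly (K2l (4 * t + g)) (n + 2) := by
  have key : 2 * n * ((n ^ 2 * (n + 1) ^ 2) ^ t * (n + 1) ^ g) +
      2 * n * ((n ^ 2 * (n + 1) ^ 2) ^ t * n ^ g) +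
      4 * ((n * (n + 1) ^ 2 * (n + 2)) ^ t * (n + 1) ^ g) < 2 * (n + 1) ^ (4 * t + g) := by
    have hn : (n : ℝ) + 1 ≠ 0 := by positivity
    have hsplit :
        ((n : ℝ) + 1) ^ (4 * t + g) = (n + 1) ^ (2 * t) * (n + 1) ^ (2 * t) * (n + 1) ^ g := by
      rw [← pow_add, ← pow_add]; ring_nf
    have hX : ((n : ℝ) ^ 2 * (n + 1) ^ 2) ^ t * (n + 1) ^ g =
        ((n : ℝ) / (n + 1)) ^ (2 * t) * (n + 1) ^ (4 * t + g) := by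
      rw [hsplit, div_pow, mul_pow, ← pow_mul, ← pow_mul, mul_comm 2 t]
      field_simp
    have hY : ((n : ℝ) * (n + 1) ^ 2 * (n + 2)) ^ t * (n + 1) ^ g =
        (1 - 1 / ((n : ℝ) + 1) ^ 2) ^ t * (n + 1) ^ (4 * t + g) := by
      rw [show 1 - 1 / ((n : ℝ) + 1) ^ 2 = n * (n + 2) / (n + 1) ^ 2 by field_simp; ring,
        hsplit]
      simp only [div_pow, mul_pow, ← pow_mul, mul_comm 2 t]
      field_simp
    have hXg : ((n : ℝ) ^ 2 * (n + 1) ^ 2) ^ t * n ^ g ≤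
        ((n : ℝ) ^ 2 * (n + 1) ^ 2) ^ t * (n + 1) ^ g :=
      mul_le_mul_of_nonneg_left (pow_le_pow_left₀ n.cast_nonneg (by linarith) g) (by positivity)
    have hQ : (0 : ℝ) < (n + 1) ^ (4 * t + g) := by positivity
    rw [← Nat.cast_lt (α := ℝ)]
    push_cast
    nlinarith
  rw [numListColorings_badAssignment, chromPoly_K2l]
  have hn : n * (n - 1) ≤ (n + 2) * (n + 1) := Nat.mul_le_mul (by omega) (by omega)
  nlinarith [Nat.mul_le_mul_right (n ^ (4 * t + g)) hn]

theorem lcfThreshold_gt_of_t_general (m t : ℕ) (hm : 3 ≤ m)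
    (ε : ℝ) (hε : ε ∈ Set.Ioo (0 : ℝ) 2)
    (htgt : (t : ℝ) >
      max (Real.log (ε / (4 * ((m : ℝ) - 2))) / (2 * Real.log (((m : ℝ) - 2) / ((m : ℝ) - 1))))
        (Real.log ((2 - ε) / 4) / Real.log (1 - 1 / ((m : ℝ) - 1) ^ 2))) :
    ∀ l : ℕ, 4 * t ≤ l → m < lcfThreshold (K2l l) := by
  intro l hl
  obtain ⟨g, rfl⟩ : ∃ g, l = 4 * t + g := ⟨l - 4 * t, by omega⟩
  obtain ⟨n, rfl⟩ : ∃ n, m = n + 2 := ⟨m - 2, by omega⟩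
  have hn : (1 : ℝ) ≤ n := by exact_mod_cast (by omega : 1 ≤ n)
  obtain ⟨hε₀, hε₂⟩ := hε
  rw [show ((n + 2 : ℕ) : ℝ) - 2 = n by push_cast; ring,
    show ((n + 2 : ℕ) : ℝ) - 1 = n + 1 by push_cast; ring, gt_iff_lt, max_lt_iff,
    div_mul_eq_div_div_swap, div_lt_iff₀ two_pos] at htgt
  have h₁ : ((n : ℝ) / (n + 1)) ^ (2 * t) < ε / (4 * n) :=
    pow_lt_of_log_div_log_lt (by positivity) ((div_lt_one (by positivity)).2 (by linarith))
      (by positivity) (by push_cast; linarith [htgt.1])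
  have h₂ : (1 - 1 / ((n : ℝ) + 1) ^ 2) ^ t < (2 - ε) / 4 :=
    pow_lt_of_log_div_log_lt (by rw [sub_pos, div_lt_one (by positivity)]; nlinarith)
      (by simp only [sub_lt_self_iff]; positivity) (by linarith) htgt.2
  refine lt_lcfThreshold_K2l (isAssignment_badAssignment n t _)
    (numListColorings_badAssignment_lt_chromPoly ?_)
  have := mul_lt_mul_of_pos_left h₁ (by positivity : (0 : ℝ) < 4 * n)
  rw [mul_div_cancel₀ _ (by positivity)] at this
  linarith

/-- Lemma 6 of the paper: if `t ∈ ℕ`, `m ≥ 3`, and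
`t > max{ln(ε/(4(m-2)))/(2 ln((m-2)/(m-1))), ln((2-ε)/4)/ln(1-1/(m-1)²)}` for some
`ε ∈ (0,2)`, then `τ(K_{2,l}) > m` whenever `l ≥ 4t`. -/
theorem lcfThreshold_gt_of_t (m t : ℕ) (hm : 3 ≤ m) (ht : 1 ≤ t)
    (ε : ℝ) (hε : ε ∈ Set.Ioo (0 : ℝ) 2)
    (htgt : (t : ℝ) >
      max (Real.log (ε / (4 * ((m : ℝ) - 2))) / (2 * Real.log (((m : ℝ) - 2) / ((m : ℝ) - 1))))
        (Real.log ((2 - ε) / 4) / Real.log (1 - 1 / ((m : ℝ) - 1) ^ 2))) :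
    ∀ l : ℕ, 4 * t ≤ l → m < lcfThreshold (K2l l) :=
  lcfThreshold_gt_of_t_general m t hm ε hε htgt
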